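/- arXiv:1811.01764 — 5 statements merged into one kernel-verified Lean document; each statement's English description precedes it below -/
import Mathlib

section
/- Let d ≥ 2 and ω ∈ C²(ℝ^d \ {0}, ℝ). Let (v̄, v̄*) be a pair of nonzero vectors with ∇ω(v̄) ≠ ∇ω(v̄*). Then there exists a bounded neighborhood U of (v̄, v̄*) contained in the set A = {(v,v*) : ∇ω(v) ≠ ∇ω(v*)}, a neighborhood V ⊂ ℝ^{d-1} of 0, and a C² function ψ : ℝ^d × ℝ^d × ℝ^{d-1} → ℝ^d such that for all (v,v*) ∈ U and σ ∈ V: ψ(v,v*,0) = 0, ω(v) + ω(v*) = ω(v − ψ(v,v*,σ)) + ω(v* + ψ(v,v*,σ)), and the Jacobian D_σψ(v,v*,0) has rank d−1. -/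
open Function
open Filter Metric Topology

/-!
Let `Φ(v, w, z) = ω v + ω w - ω (v - z) - ω (w + z)`. Its derivative in `z` at `z = 0` is
`∇ω(v) - ∇ω(w)`, which is nonzero on some coordinate vector `eᵢ`. Writing `z` as its `i`-th
coordinate `t` together with the other coordinates `σ ∈ ℝ^{d-1}`, the implicit function theorem
solves `Φ = 0` for `t = g(v, w, σ)` with `g` of class `C²`, and a bump function makes `g` globally
`C²` without changing it near the base point. Uniqueness of the implicit function, together with
`Φ(v, w, 0) = 0`, gives `g(v, w, 0) = 0`. Finally `ψ(v, w, σ)` is `σ` with `g(v, w, σ)` inserted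
at position `i`; forgetting that coordinate recovers `σ`, so `D_σψ` is injective, of rank `d - 1`.
-/

theorem ContDiffAt.exists_contDiff_eventuallyEq {E F : Type*} [NormedAddCommGroup E]
    [NormedSpace ℝ E] [HasContDiffBump E] [NormedAddCommGroup F] [NormedSpace ℝ F]
    {f : E → F} {x : E} {n : ℕ} (hf : ContDiffAt ℝ n f x) :
    ∃ g : E → F, ContDiff ℝ n g ∧ g =ᶠ[𝓝 x] f := by
  obtain ⟨r, hr, hfr⟩ := eventually_nhds_iff_ball.1 (hf.eventually (by simp))
  let χ : ContDiffBump x := ⟨r / 4, r / 2, by positivity, by linarith⟩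
  refine ⟨fun y => χ y • f y, contDiff_iff_contDiffAt.2 fun y => ?_, ?_⟩
  · by_cases hy : y ∈ ball x r
    · exact χ.contDiffAt.smul (hfr y hy)
    · have hχ : (χ : E → ℝ) =ᶠ[𝓝 y] 0 := by
        refine notMem_tsupport_iff_eventuallyEq.1 fun hy' => hy ?_
        rw [χ.tsupport_eq] at hy'
        exact closedBall_subset_ball (show r / 2 < r by linarith) hy'
      refine contDiffAt_const (c := (0 : F)).congr_of_eventuallyEq ?_
      filter_upwards [hχ] with z hz
      simp [hz]
  · filter_upwards [χ.eventuallyEq_one] with y hy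
    simp [hy]

theorem ContDiffAt.exists_contDiff_implicit {E : Type*} [NormedAddCommGroup E]
    [NormedSpace ℝ E] [CompleteSpace E] [HasContDiffBump E] {f : E × ℝ → ℝ} {u : E × ℝ}
    {n : ℕ} (hf : ContDiffAt ℝ n f u) (hn : n ≠ 0) {c : ℝ}
    (hc : HasDerivAt (fun t => f (u.1, t)) c u.2) (hc₀ : c ≠ 0) :
    ∃ g : E → ℝ, ContDiff ℝ n g ∧ (∀ᶠ x in 𝓝 u.1, f (x, g x) = f u) ∧
      ∀ᶠ v in 𝓝 u, f v = f u → g v.1 = v.2 := by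
  have hn' : (n : WithTop ℕ∞) ≠ 0 := by exact_mod_cast hn
  have hinv : (fderiv ℝ f u ∘L .inr ℝ E ℝ).IsInvertible := by
    have hf' : HasFDerivAt f (fderiv ℝ f u) (u.1, u.2) := (hf.differentiableAt hn').hasFDerivAt
    have hpartial := hf'.comp u.2 (hasFDerivAt_prodMk_right (𝕜 := ℝ) u.1 u.2)
    refine ⟨ContinuousLinearEquiv.unitsEquivAut ℝ (Units.mk0 c hc₀), ?_⟩
    rw [hpartial.unique hc.hasFDerivAt]
    ext
    simp
  obtain ⟨g, hg, hgφ⟩ := (hf.contDiffAt_implicitFunction hn' hinv).exists_contDiff_eventuallyEq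
  refine ⟨g, hg, ?_, ?_⟩
  · filter_upwards [hgφ, hf.eventually_apply_implicitFunction hn' hinv] with x hgx hx
    rw [hgx, hx]
  · filter_upwards [hf.eventually_apply_eq_iff_implicitFunction hn' hinv,
      continuousAt_fst.tendsto.eventually hgφ] with v hv hgv hfv
    rw [hgv, ← hv.1 hfv]

theorem Filter.Eventually.exists_ball_prod {α β : Type*} [PseudoMetricSpace α]
    [PseudoMetricSpace β] {a : α} {b : β} {P : α × β → Prop} (h : ∀ᶠ x in 𝓝 (a, b), P x) :
    ∃ ε > 0, ∀ x ∈ ball a ε, ∀ y ∈ ball b ε, P (x, y) := by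
  obtain ⟨ε, hε, hP⟩ := eventually_nhds_iff_ball.1 h
  exact ⟨ε, hε, fun x hx y hy => hP _ (ball_prod_same a b ε ▸ Set.mk_mem_prod hx hy)⟩

theorem ContinuousOn.eventually_mem_and_apply_ne {X Y : Type*} [TopologicalSpace X]
    [TopologicalSpace Y] [T2Space Y] {f : X → Y} {s : Set X} (hf : ContinuousOn f s)
    (hs : IsOpen s) {a b : X} (ha : a ∈ s) (hb : b ∈ s) (hab : f a ≠ f b) :
    ∀ᶠ p in 𝓝 (a, b), p.1 ∈ s ∧ p.2 ∈ s ∧ f p.1 ≠ f p.2 := by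
  have hfa := (hf.continuousAt (hs.mem_nhds ha)).comp (x := (a, b)) continuousAt_fst
  have hfb := (hf.continuousAt (hs.mem_nhds hb)).comp (x := (a, b)) continuousAt_snd
  filter_upwards [continuousAt_fst.tendsto.eventually (hs.mem_nhds ha),
    continuousAt_snd.tendsto.eventually (hs.mem_nhds hb), (hfa.ne_iff_eventually_ne hfb).1 hab]
    with p hp₁ hp₂ hp using ⟨hp₁, hp₂, hp⟩

def Fin.insertNthLinearEquiv (R M : Type*) [Semiring R] [AddCommMonoid M] [Module R M] {n : ℕ}
    (i : Fin (n + 1)) : (M × (Fin n → M)) ≃ₗ[R] (Fin (n + 1) → M) where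
  toFun x := Fin.insertNth i x.1 x.2
  invFun z := (z i, Fin.removeNth i z)
  left_inv x := by simp
  right_inv z := by simp
  map_add' x y := Fin.insertNth_add (α := fun _ => M) i x.1 y.1 x.2 y.2
  map_smul' c x := by
    ext j
    cases j using Fin.succAboveCases i <;> simp

@[simp]
theorem Fin.insertNthLinearEquiv_apply (R M : Type*) [Semiring R] [AddCommMonoid M] [Module R M]
    {n : ℕ} (i : Fin (n + 1)) (x : M × (Fin n → M)) :
    Fin.insertNthLinearEquiv R M i x = Fin.insertNth i x.1 x.2 :=
  rfl

theorem ContinuousLinearMap.exists_apply_single_ne {ι : Type*} [Fintype ι] [DecidableEq ι]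
    {ℓ ℓ' : (ι → ℝ) →L[ℝ] ℝ} (h : ℓ ≠ ℓ') : ∃ i, ℓ (Pi.single i 1) ≠ ℓ' (Pi.single i 1) := by
  contrapose! h
  refine ContinuousLinearMap.coe_injective (LinearMap.pi_ext fun i x => ?_)
  have hx : (Pi.single i x : ι → ℝ) = x • Pi.single i 1 := by simp [← Pi.single_smul]
  simp only [ContinuousLinearMap.coe_coe, hx, map_smul, h i]

theorem injective_fderiv_of_leftInverse {𝕜 S E : Type*} [NontriviallyNormedField 𝕜]
    [NormedAddCommGroup S] [NormedSpace 𝕜 S] [NormedAddCommGroup E] [NormedSpace 𝕜 E]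
    {f : S → E} {π : E →L[𝕜] S} {x : S} (hπ : LeftInverse π f) (hf : DifferentiableAt 𝕜 f x) :
    Injective (fderiv 𝕜 f x) := by
  have h := π.hasFDerivAt.comp x hf.hasFDerivAt
  rw [hπ.comp_eq_id] at h
  have hcomp := h.unique (hasFDerivAt_id x)
  exact LeftInverse.injective (g := π) fun v => congr($hcomp v)

section EnergyDefect

variable {E : Type*}

def energyDefect [AddGroup E] (ω : E → ℝ) (p : E × E) (z : E) : ℝ :=
  ω p.1 + ω p.2 - ω (p.1 - z) - ω (p.2 + z)

theorem energyDefect_eq_zero_iff [AddGroup E] {ω : E → ℝ} {p : E × E} {z : E} :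
    energyDefect ω p z = 0 ↔ ω p.1 + ω p.2 = ω (p.1 - z) + ω (p.2 + z) := by
  rw [energyDefect, sub_sub, sub_eq_zero]

@[simp]
theorem energyDefect_zero [AddGroup E] (ω : E → ℝ) (p : E × E) : energyDefect ω p 0 = 0 := by
  simp [energyDefect]

variable [NormedAddCommGroup E] [NormedSpace ℝ E] {ω : E → ℝ} {v w : E}

theorem contDiffAt_energyDefect {n : WithTop ℕ∞} (hv : ContDiffAt ℝ n ω v)
    (hw : ContDiffAt ℝ n ω w) :
    ContDiffAt ℝ n (fun x : (E × E) × E => energyDefect ω x.1 x.2) ((v, w), 0) := by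
  have hv' : ContDiffAt ℝ n ω (v - 0) := by rwa [sub_zero]
  have hw' : ContDiffAt ℝ n ω (w + 0) := by rwa [add_zero]
  unfold energyDefect
  fun_prop

theorem hasDerivAt_energyDefect_smul (hv : DifferentiableAt ℝ ω v)
    (hw : DifferentiableAt ℝ ω w) (e : E) :
    HasDerivAt (fun t : ℝ => energyDefect ω (v, w) (t • e))
      (fderiv ℝ ω v e - fderiv ℝ ω w e) 0 := by
  have hline : HasDerivAt (fun t : ℝ => t • e) e 0 := by
    simpa using (hasDerivAt_id (0 : ℝ)).smul_const e
  have hv' := hv.hasFDerivAt.comp_hasDerivAt_of_eq 0 (HasDerivAt.const_sub v hline) (by simp)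
  have hw' := hw.hasFDerivAt.comp_hasDerivAt_of_eq 0 (HasDerivAt.const_add w hline) (by simp)
  exact (((hasDerivAt_const (0 : ℝ) (ω v + ω w)).sub hv').sub hw').congr_deriv
    (by rw [map_neg]; ring)

end EnergyDefect

theorem exists_contDiff_energyDefect_eq_zero {E S : Type*} [NormedAddCommGroup E]
    [NormedSpace ℝ E] [FiniteDimensional ℝ E] [NormedAddCommGroup S] [NormedSpace ℝ S]
    [FiniteDimensional ℝ S] (L : ℝ × S →L[ℝ] E) {ω : E → ℝ} {n : ℕ} (hn : n ≠ 0) {v₀ w₀ : E}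
    (hv : ContDiffAt ℝ n ω v₀) (hw : ContDiffAt ℝ n ω w₀)
    (hL : fderiv ℝ ω v₀ (L (1, 0)) ≠ fderiv ℝ ω w₀ (L (1, 0))) :
    ∃ g : (E × E) × S → ℝ, ContDiff ℝ n g ∧ (∀ᶠ p in 𝓝 (v₀, w₀), g (p, 0) = 0) ∧
      ∀ᶠ x in 𝓝 ((v₀, w₀), 0), energyDefect ω x.1 (L (g x, x.2)) = 0 := by
  let f : ((E × E) × S) × ℝ → ℝ := fun y => energyDefect ω y.1.1 (L (y.2, y.1.2))
  have hf : ContDiffAt ℝ n f (((v₀, w₀), 0), 0) := by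
    have h : ContDiffAt ℝ n (fun x : (E × E) × E => energyDefect ω x.1 x.2)
        ((v₀, w₀), L (0, 0)) := by
      simpa only [Prod.mk_zero_zero, map_zero] using contDiffAt_energyDefect hv hw
    have hin : ContDiffAt ℝ n (fun y : ((E × E) × S) × ℝ => (y.1.1, L (y.2, y.1.2)))
        (((v₀, w₀), 0), 0) := by fun_prop
    exact h.comp (((v₀, w₀), 0), 0) hin
  have hc : HasDerivAt (fun t => f (((v₀, w₀), 0), t))
      (fderiv ℝ ω v₀ (L (1, 0)) - fderiv ℝ ω w₀ (L (1, 0))) 0 := by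
    have hline : (fun t => f (((v₀, w₀), 0), t)) =
        fun t : ℝ => energyDefect ω (v₀, w₀) (t • L (1, 0)) := by
      ext t
      simp only [f, ← map_smul, Prod.smul_mk, smul_zero, smul_eq_mul, mul_one]
    rw [hline]
    exact hasDerivAt_energyDefect_smul (hv.differentiableAt (by simpa))
      (hw.differentiableAt (by simpa)) (L (1, 0))
  obtain ⟨g, hg, hfg, hgf⟩ := hf.exists_contDiff_implicit hn hc (sub_ne_zero.2 hL)
  have hfu : f (((v₀, w₀), 0), 0) = 0 := by simp [f, Prod.mk_zero_zero]
  refine ⟨g, hg, ?_, by simpa [hfu] using hfg⟩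
  have hsection : Tendsto (fun p : E × E => ((p, (0 : S)), (0 : ℝ))) (𝓝 (v₀, w₀))
      (𝓝 (((v₀, w₀), 0), 0)) :=
    ((continuous_id.prodMk continuous_const).prodMk continuous_const).tendsto _
  filter_upwards [hsection.eventually hgf] with p hp
  exact hp (by simp [f, hfu, Prod.mk_zero_zero])

theorem stmt_0_general (d : ℕ) (ω : (Fin d → ℝ) → ℝ)
    (hω : ContDiffOn ℝ 2 ω {v : Fin d → ℝ | v ≠ 0})
    (v₀ w₀ : Fin d → ℝ) (hv₀ : v₀ ≠ 0) (hw₀ : w₀ ≠ 0)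
    (hgrad : fderiv ℝ ω v₀ ≠ fderiv ℝ ω w₀) :
    ∃ (U : Set ((Fin d → ℝ) × (Fin d → ℝ))) (V : Set (Fin (d - 1) → ℝ))
      (ψ : (Fin d → ℝ) → (Fin d → ℝ) → (Fin (d - 1) → ℝ) → (Fin d → ℝ)),
      IsOpen U ∧ (v₀, w₀) ∈ U ∧ Bornology.IsBounded U ∧
      U ⊆ {p : (Fin d → ℝ) × (Fin d → ℝ) |
        p.1 ≠ 0 ∧ p.2 ≠ 0 ∧ fderiv ℝ ω p.1 ≠ fderiv ℝ ω p.2} ∧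
      IsOpen V ∧ (0 : Fin (d - 1) → ℝ) ∈ V ∧
      ContDiff ℝ 2
        (fun p : ((Fin d → ℝ) × (Fin d → ℝ)) × (Fin (d - 1) → ℝ) => ψ p.1.1 p.1.2 p.2) ∧
      (∀ v w, (v, w) ∈ U → ψ v w 0 = 0 ∧
        ∀ σ ∈ V, ω v + ω w = ω (v - ψ v w σ) + ω (w + ψ v w σ)) ∧
      (∀ v w, (v, w) ∈ U →
        LinearMap.rank
          ((fderiv ℝ (fun σ => ψ v w σ) 0 : (Fin (d - 1) → ℝ) →L[ℝ] (Fin d → ℝ)) :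
            (Fin (d - 1) → ℝ) →ₗ[ℝ] (Fin d → ℝ)) = ((d - 1 : ℕ) : Cardinal)) := by
  obtain ⟨i, hi⟩ := ContinuousLinearMap.exists_apply_single_ne hgrad
  obtain ⟨n, rfl⟩ := Nat.exists_eq_add_one_of_ne_zero i.pos.ne'
  let L := (Fin.insertNthLinearEquiv ℝ ℝ i).toContinuousLinearEquiv
  have hωat {v : Fin (n + 1) → ℝ} (hv : v ≠ 0) : ContDiffAt ℝ (2 : ℕ) ω v :=
    hω.contDiffAt (isOpen_ne.mem_nhds hv)
  obtain ⟨g, hg, hg₀, hgω⟩ := exists_contDiff_energyDefect_eq_zero (L : ℝ × (Fin n → ℝ) →L[ℝ] _)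
    two_ne_zero (hωat hv₀) (hωat hw₀) (by simpa [L] using hi)
  have hA := (hω.continuousOn_fderiv_of_isOpen isOpen_ne one_le_two).eventually_mem_and_apply_ne
    isOpen_ne hv₀ hw₀ hgrad
  obtain ⟨ε, hε, hball⟩ := (((hg₀.and hA).prod_inl_nhds 0).and hgω).exists_ball_prod
  refine ⟨ball (v₀, w₀) ε, ball 0 ε, fun v w σ => L (g ((v, w), σ), σ), isOpen_ball,
    mem_ball_self hε, isBounded_ball, fun p hp => (hball p hp 0 (mem_ball_self hε)).1.2,
    isOpen_ball, mem_ball_self hε, L.contDiff.comp (hg.prodMk contDiff_snd),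
    fun v w hvw => ⟨?_, fun σ hσ => ?_⟩, fun v w _ => ?_⟩
  · simp [(hball (v, w) hvw 0 (mem_ball_self hε)).1.1]
  · exact energyDefect_eq_zero_iff.1 (hball (v, w) hvw σ hσ).2
  · have hgd := hg.differentiable (by simp)
    have hinj := injective_fderiv_of_leftInverse (π := .snd ℝ ℝ _ ∘L L.symm)
      (f := fun σ => L (g ((v, w), σ), σ)) (fun σ => by simp) (x := 0) (by fun_prop)
    exact (rank_range_of_injective _ hinj).trans (rank_fin_fun n)

theorem stmt_0 (d : ℕ) (hd : 2 ≤ d) (ω : (Fin d → ℝ) → ℝ)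
    (hω : ContDiffOn ℝ 2 ω {v : Fin d → ℝ | v ≠ 0})
    (v₀ w₀ : Fin d → ℝ) (hv₀ : v₀ ≠ 0) (hw₀ : w₀ ≠ 0)
    (hgrad : fderiv ℝ ω v₀ ≠ fderiv ℝ ω w₀) :
    ∃ (U : Set ((Fin d → ℝ) × (Fin d → ℝ))) (V : Set (Fin (d - 1) → ℝ))
      (ψ : (Fin d → ℝ) → (Fin d → ℝ) → (Fin (d - 1) → ℝ) → (Fin d → ℝ)),
      IsOpen U ∧ (v₀, w₀) ∈ U ∧ Bornology.IsBounded U ∧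
      U ⊆ {p : (Fin d → ℝ) × (Fin d → ℝ) |
        p.1 ≠ 0 ∧ p.2 ≠ 0 ∧ fderiv ℝ ω p.1 ≠ fderiv ℝ ω p.2} ∧
      IsOpen V ∧ (0 : Fin (d - 1) → ℝ) ∈ V ∧
      ContDiff ℝ 2
        (fun p : ((Fin d → ℝ) × (Fin d → ℝ)) × (Fin (d - 1) → ℝ) => ψ p.1.1 p.1.2 p.2) ∧
      (∀ v w, (v, w) ∈ U → ψ v w 0 = 0 ∧
        ∀ σ ∈ V, ω v + ω w = ω (v - ψ v w σ) + ω (w + ψ v w σ)) ∧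
      (∀ v w, (v, w) ∈ U →
        LinearMap.rank
          ((fderiv ℝ (fun σ => ψ v w σ) 0 : (Fin (d - 1) → ℝ) →L[ℝ] (Fin d → ℝ)) :
            (Fin (d - 1) → ℝ) →ₗ[ℝ] (Fin d → ℝ)) = ((d - 1 : ℕ) : Cardinal)) :=
  stmt_0_general d ω hω v₀ w₀ hv₀ hw₀ hgrad
end

section
/- Let d ≥ 2 and let p, q ∈ C¹(ℝ^d \ {0}, ℝ) be such that {1, p, q} is linearly independent in C¹(ℝ^d \ {0}, ℝ). If there exist a, b, c ∈ ℝ such that for all v, v* ∈ ℝ^d \ {0}, a(p(v)−p(v*))² + b(p(v)−p(v*))(q(v)−q(v*)) + c(q(v)−q(v*))² = 0, then a = b = c = 0. -/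
theorem stmt_3 (d : ℕ) (hd : 2 ≤ d) (p q : (Fin d → ℝ) → ℝ)
    (hp : ContDiffOn ℝ 1 p {v : Fin d → ℝ | v ≠ 0})
    (hq : ContDiffOn ℝ 1 q {v : Fin d → ℝ | v ≠ 0})
    (hindep : ∀ α β γ : ℝ,
      (∀ v : Fin d → ℝ, v ≠ 0 → α + β * p v + γ * q v = 0) → α = 0 ∧ β = 0 ∧ γ = 0)
    (a b c : ℝ)
    (hquad : ∀ v w : Fin d → ℝ, v ≠ 0 → w ≠ 0 →
      a * (p v - p w) ^ 2 + b * (p v - p w) * (q v - q w) + c * (q v - q w) ^ 2 = 0) :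
    a = 0 ∧ b = 0 ∧ c = 0 := by
  set v₀ : Fin d → ℝ := fun _ => 1 with hv₀def
  have hv₀ : v₀ ≠ 0 := by
    intro h
    have := congrFun h ⟨0, by omega⟩
    simp [hv₀def] at this
  -- polarization: bilinear form vanishes
  have hB : ∀ v w : Fin d → ℝ, v ≠ 0 → w ≠ 0 →
      (2*a*(p w - p v₀) + b*(q w - q v₀)) * (p v - p v₀)
        + (b*(p w - p v₀) + 2*c*(q w - q v₀)) * (q v - q v₀) = 0 := by
    intro v w hv hw
    have h1 := hquad v w hv hw
    have h2 := hquad v v₀ hv hv₀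
    have h3 := hquad w v₀ hw hv₀
    linear_combination h2 + h3 - h1
  have hcoef : ∀ w : Fin d → ℝ, w ≠ 0 →
      (2*a*(p w - p v₀) + b*(q w - q v₀)) = 0 ∧ (b*(p w - p v₀) + 2*c*(q w - q v₀)) = 0 := by
    intro w hw
    have := hindep (-((2*a*(p w - p v₀) + b*(q w - q v₀)) * p v₀
        + (b*(p w - p v₀) + 2*c*(q w - q v₀)) * q v₀))
      (2*a*(p w - p v₀) + b*(q w - q v₀)) (b*(p w - p v₀) + 2*c*(q w - q v₀))
      (fun v hv => by linear_combination hB v w hv hw)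
    exact ⟨this.2.1, this.2.2⟩
  have h1 := hindep (-(2*a*p v₀ + b*q v₀)) (2*a) b
    (fun w hw => by linear_combination (hcoef w hw).1)
  have h2 := hindep (-(b*p v₀ + 2*c*q v₀)) b (2*c)
    (fun w hw => by linear_combination (hcoef w hw).2)
  refine ⟨by linarith [h1.2.1], h1.2.2, by linarith [h2.2.2]⟩
end

section
/- Let d ∈ {2,3} and ω ∈ C²(ℝ^d \ {0}, ℝ), and assume there exist i ≠ j in {1,…,d} such that {1, ∂_iω, ∂_jω} are linearly independent in C¹(ℝ^d \ {0}). Let g ∈ C¹(ℝ^d \ {0}, ℝ) be such that for all v, v*, v', v*' ∈ ℝ^d with v + v* = v' + v*' and ω(v) + ω(v*) = ω(v') + ω(v*'), one has g(v) + g(v*) = g(v') + g(v*'). Then there exist a, c ∈ ℝ and b ∈ ℝ^d such that g(v) = a + b·v + c ω(v) for all v ∈ ℝ^d \ {0}. -/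
/-!
Fix `v, w` with `Dω(v) ≠ Dω(w)`. The collision relation says that `x ↦ g x + g (v + w - x)` is
constant on the level set of `x ↦ ω x + ω (v + w - x)` through `v`; by the implicit function
theorem that level set has every vector of `ker (Dω(v) - Dω(w))` as a tangent, so
`Dg(v) - Dg(w)` is a multiple of `Dω(v) - Dω(w)`. The linear independence of `1, ∂ᵢω, ∂ⱼω` says
that the gradients of `ω` are not collinear, and comparing the slopes around non-degenerate
triangles of gradients shows the multiple is one constant `c`. Hence `Dg = b + c Dω`, which
integrates on the connected set `ℝᵈ \ {0}`.
-/

open Filter Topology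

section Algebra

variable {K V α : Type*} [Field K] [AddCommGroup V] [Module K V]

theorem LinearIndependent.eq_of_smul_sub_smul_eq {u₁ u₂ : V} {c₁ c₂ c : K}
    (hu : LinearIndependent K ![u₁, u₂]) (h : c₂ • u₂ - c₁ • u₁ = c • (u₂ - u₁)) :
    c₁ = c ∧ c₂ = c := by
  obtain ⟨h₁, h₂⟩ := LinearIndependent.pair_iff.1 hu (c₁ - c) (c - c₂)
    (by linear_combination (norm := module) -h)
  exact ⟨sub_eq_zero.1 h₁, (sub_eq_zero.1 h₂).symm⟩

theorem LinearIndependent.pair_or_pair_of_ne_zero {u₁ u₂ x : V}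
    (hu : LinearIndependent K ![u₁, u₂]) (hx : x ≠ 0) :
    LinearIndependent K ![u₁, x] ∨ LinearIndependent K ![u₂, x] := by
  have hu₁ : u₁ ≠ 0 := by simpa using hu.ne_zero 0
  have hu₂ : u₂ ≠ 0 := by simpa using hu.ne_zero 1
  rw [LinearIndependent.pair_iff' hu₁, LinearIndependent.pair_iff' hu₂]
  by_contra! ⟨⟨r₁, hr₁⟩, ⟨r₂, hr₂⟩⟩
  obtain ⟨rfl, -⟩ := LinearIndependent.pair_iff.1 hu r₁ (-r₂) (by rw [hr₁, neg_smul, hr₂]; abel)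
  exact hx (by rw [← hr₁, zero_smul])

variable (K) in
def HasParallelIncrements (S : Set α) (W G : α → V) : Prop :=
  ∀ a ∈ S, ∀ b ∈ S, W a ≠ W b → ∃ c : K, G a - G b = c • (W a - W b)

variable {S : Set α} {W G : α → V}

theorem slopes_eq_of_linearIndependent {a z₁ z₂ : α} {c₁ c₂ c : K}
    (hu : LinearIndependent K ![W z₁ - W a, W z₂ - W a])
    (h₁ : G z₁ - G a = c₁ • (W z₁ - W a)) (h₂ : G z₂ - G a = c₂ • (W z₂ - W a))
    (h₁₂ : G z₂ - G z₁ = c • (W z₂ - W z₁)) : c₁ = c ∧ c₂ = c :=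
  hu.eq_of_smul_sub_smul_eq <| by
    rw [← h₁, ← h₂, sub_sub_sub_cancel_right, h₁₂, sub_sub_sub_cancel_right]

theorem exists_mem_forall_smul_ne_sub (hW : ¬ Collinear K (W '' S)) {a : α} (ha : a ∈ S)
    (m : V) : ∃ z ∈ S, ∀ r : K, r • m ≠ W z - W a := by
  by_contra! h
  refine hW ((collinear_iff_of_mem (Set.mem_image_of_mem W ha)).2 ⟨m, ?_⟩)
  rintro _ ⟨z, hz, rfl⟩
  obtain ⟨r, hr⟩ := h z hz
  exact ⟨r, by rw [vadd_eq_add, hr, sub_add_cancel]⟩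

theorem exists_linearIndependent_sub (hW : ¬ Collinear K (W '' S)) {a : α} (ha : a ∈ S) :
    ∃ z₁ ∈ S, ∃ z₂ ∈ S, LinearIndependent K ![W z₁ - W a, W z₂ - W a] := by
  obtain ⟨z₁, hz₁, h₁⟩ := exists_mem_forall_smul_ne_sub hW ha 0
  obtain ⟨z₂, hz₂, h₂⟩ := exists_mem_forall_smul_ne_sub hW ha (W z₁ - W a)
  exact ⟨z₁, hz₁, z₂, hz₂, (LinearIndependent.pair_iff' (by simpa [eq_comm] using h₁ 0)).2 h₂⟩

theorem LinearIndependent.ne_of_pair_sub {a z₁ z₂ : α}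
    (hu : LinearIndependent K ![W z₁ - W a, W z₂ - W a]) :
    W z₁ ≠ W a ∧ W z₂ ≠ W a ∧ W z₂ ≠ W z₁ := by
  refine ⟨sub_ne_zero.1 (by simpa using hu.ne_zero 0), sub_ne_zero.1 (by simpa using hu.ne_zero 1),
    fun h => ?_⟩
  have := hu.injective.ne (show (0 : Fin 2) ≠ 1 by decide)
  simp [h] at this

namespace HasParallelIncrements

variable (hP : HasParallelIncrements K S W G) (hW : ¬ Collinear K (W '' S))
include hP hW

theorem eq_of_eq {a b : α} (ha : a ∈ S) (hb : b ∈ S) (hab : W a = W b) : G a = G b := by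
  obtain ⟨z₁, hz₁, z₂, hz₂, hu⟩ := exists_linearIndependent_sub hW ha
  have hu' : LinearIndependent K ![W z₁ - W b, W z₂ - W b] := hab ▸ hu
  obtain ⟨h₁, h₂, h₂₁⟩ := hu.ne_of_pair_sub
  obtain ⟨c, hc⟩ := hP z₂ hz₂ z₁ hz₁ h₂₁
  obtain ⟨c₁, hc₁⟩ := hP z₁ hz₁ a ha h₁
  obtain ⟨c₂, hc₂⟩ := hP z₂ hz₂ a ha h₂
  obtain ⟨d₁, hd₁⟩ := hP z₁ hz₁ b hb (hab ▸ h₁)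
  obtain ⟨d₂, hd₂⟩ := hP z₂ hz₂ b hb (hab ▸ h₂)
  obtain ⟨rfl, -⟩ := slopes_eq_of_linearIndependent hu hc₁ hc₂ hc
  obtain ⟨rfl, -⟩ := slopes_eq_of_linearIndependent hu' hd₁ hd₂ hc
  rw [hab] at hc₁
  exact sub_right_injective (hc₁.trans hd₁.symm)

theorem exists_sub_eq_smul {a b : α} (ha : a ∈ S) (hb : b ∈ S) :
    ∃ c : K, G a - G b = c • (W a - W b) := by
  by_cases hab : W a = W b
  · exact ⟨0, by rw [hP.eq_of_eq hW ha hb hab, sub_self, zero_smul]⟩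
  · exact hP a ha b hb hab

theorem exists_eq_add_smul : ∃ (b : V) (c : K), ∀ a ∈ S, G a = b + c • W a := by
  obtain ⟨_, a₀, ha₀, rfl⟩ : (W '' S).Nonempty :=
    Set.nonempty_iff_ne_empty.2 fun h => hW (h ▸ collinear_empty _ _)
  obtain ⟨a₁, ha₁, a₂, ha₂, hu⟩ := exists_linearIndependent_sub hW ha₀
  obtain ⟨c₁, hc₁⟩ := hP.exists_sub_eq_smul hW ha₁ ha₀
  obtain ⟨c, hc₂⟩ := hP.exists_sub_eq_smul hW ha₂ ha₀
  obtain ⟨c₁₂, hc₁₂⟩ := hP.exists_sub_eq_smul hW ha₂ ha₁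
  obtain ⟨rfl, rfl⟩ := slopes_eq_of_linearIndependent hu hc₁ hc₂ hc₁₂
  refine ⟨G a₀ - c • W a₀, c, fun a ha => ?_⟩
  suffices G a - G a₀ = c • (W a - W a₀) by linear_combination (norm := module) this
  obtain ⟨α, hα⟩ := hP.exists_sub_eq_smul hW ha ha₀
  rcases eq_or_ne (W a - W a₀) 0 with h₀ | h₀
  · rw [hα, h₀, smul_zero, smul_zero]
  -- `a` spans a non-degenerate triangle with `a₀` and one of `a₁`, `a₂`.
  rcases hu.pair_or_pair_of_ne_zero h₀ with h | h
  · obtain ⟨s, hs⟩ := hP.exists_sub_eq_smul hW ha ha₁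
    obtain ⟨rfl, rfl⟩ := slopes_eq_of_linearIndependent h hc₁ hα hs
    exact hα
  · obtain ⟨s, hs⟩ := hP.exists_sub_eq_smul hW ha ha₂
    obtain ⟨rfl, rfl⟩ := slopes_eq_of_linearIndependent h hc₂ hα hs
    exact hα

end HasParallelIncrements

end Algebra

section LevelSet

variable {𝕜 E F G : Type*} [NontriviallyNormedField 𝕜] [CompleteSpace 𝕜]
  [NormedAddCommGroup E] [NormedSpace 𝕜 E] [CompleteSpace E]
  [NormedAddCommGroup F] [NormedSpace 𝕜 F] [FiniteDimensional 𝕜 F]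
  [NormedAddCommGroup G] [NormedSpace 𝕜 G]

theorem HasStrictFDerivAt.ker_le_ker_of_eventually {f : E → F} {f' : E →L[𝕜] F} {φ : E → G}
    {φ' : E →L[𝕜] G} {a : E} (hf : HasStrictFDerivAt f f' a) (hf' : f'.range = ⊤)
    (hφ : HasFDerivAt φ φ' a) (h : ∀ᶠ x in 𝓝 a, f x = f a → φ x = φ a) : f'.ker ≤ φ'.ker := by
  set ψ := hf.implicitFunction f f' hf' (f a)
  have hψ0 : ψ 0 = a := hf.implicitFunction_apply_image hf'
  have hψ : HasFDerivAt ψ f'.ker.subtypeL 0 := (hf.to_implicitFunction hf').hasFDerivAt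
  have hlevel : ∀ᶠ z in 𝓝 (0 : f'.ker), f (ψ z) = f a :=
    (Continuous.tendsto (by fun_prop) 0).eventually (hf.map_implicitFunction_eq hf')
  have hconst : ∀ᶠ z in 𝓝 (0 : f'.ker), φ (ψ z) = φ a := by
    have hψa : Tendsto ψ (𝓝 0) (𝓝 a) := hψ0 ▸ hψ.continuousAt.tendsto
    filter_upwards [hlevel, hψa.eventually h] with z hz hzφ using hzφ hz
  have hcomp : HasFDerivAt (φ ∘ ψ) (φ'.comp f'.ker.subtypeL) 0 := (hψ0 ▸ hφ).comp 0 hψ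
  have hzero := hcomp.unique ((hasFDerivAt_const (φ a) 0).congr_of_eventuallyEq hconst)
  exact fun δ hδ => by simpa using congr($hzero ⟨δ, hδ⟩)

end LevelSet

theorem ContinuousLinearMap.exists_eq_smul_of_ker_le {𝕜 E : Type*} [NontriviallyNormedField 𝕜]
    [NormedAddCommGroup E] [NormedSpace 𝕜 E] {n f : E →L[𝕜] 𝕜} (hn : n ≠ 0)
    (h : n.ker ≤ f.ker) : ∃ c : 𝕜, f = c • n := by
  obtain ⟨e, he⟩ : ∃ e, n e = 1 := (LinearMap.surjective (f := (n : Module.Dual 𝕜 E))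
    (by exact_mod_cast hn)) 1
  refine ⟨f e, ext fun y => ?_⟩
  have := h (show y - n y • e ∈ n.ker by simp [he])
  simp only [LinearMap.mem_ker, ContinuousLinearMap.coe_coe, map_sub, map_smul, smul_eq_mul,
    sub_eq_zero] at this
  rw [this, smul_apply, smul_eq_mul, mul_comm]

section Collision

variable {𝕜 E F : Type*} [RCLike 𝕜] [NormedAddCommGroup E] [NormedSpace 𝕜 E]
  [NormedAddCommGroup F] [NormedSpace 𝕜 F]

theorem HasStrictFDerivAt.add_comp_sub {f : E → F} {f₁' f₂' : E →L[𝕜] F} {v w : E}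
    (h₁ : HasStrictFDerivAt f f₁' v) (h₂ : HasStrictFDerivAt f f₂' w) :
    HasStrictFDerivAt (fun x => f x + f (v + w - x)) (f₁' - f₂') v := by
  have h₂' : HasStrictFDerivAt f f₂' (v + w - v) := by rwa [add_sub_cancel_left]
  refine (h₁.add (h₂'.comp v ((hasStrictFDerivAt_id v).const_sub _))).congr_fderiv ?_
  ext
  simp [sub_eq_add_neg]

theorem hasParallelIncrements_fderiv [CompleteSpace E] {S : Set E} {ω g : E → 𝕜}
    (hS : IsOpen S) (hω : ContDiffOn 𝕜 1 ω S) (hg : ContDiffOn 𝕜 1 g S)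
    (hcoll : ∀ v w v' w' : E, v + w = v' + w' → ω v + ω w = ω v' + ω w' →
      g v + g w = g v' + g w') :
    HasParallelIncrements 𝕜 S (fderiv 𝕜 ω) (fderiv 𝕜 g) := by
  intro v hv w hw hne
  have hstrict {f : E → 𝕜} (hf : ContDiffOn 𝕜 1 f S) {x : E} (hx : x ∈ S) :
      HasStrictFDerivAt f (fderiv 𝕜 f x) x :=
    (hf.contDiffAt (hS.mem_nhds hx)).hasStrictFDerivAt one_ne_zero
  have hψ := (hstrict hω hv).add_comp_sub (hstrict hω hw)
  have hΦ := (hstrict hg hv).add_comp_sub (hstrict hg hw)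
  have hlevel : ∀ x, ω x + ω (v + w - x) = ω v + ω (v + w - v) →
      g x + g (v + w - x) = g v + g (v + w - v) := fun x hx => by
    rw [add_sub_cancel_left] at hx ⊢
    exact hcoll _ _ _ _ (add_sub_cancel _ _) hx
  refine ContinuousLinearMap.exists_eq_smul_of_ker_le (sub_ne_zero.2 hne) <|
    hψ.ker_le_ker_of_eventually ?_ hΦ.hasFDerivAt (.of_forall hlevel)
  exact Module.Dual.range_eq_top_of_ne_zero (by exact_mod_cast sub_ne_zero.2 hne)

end Collision

theorem not_collinear_image_of_linearIndependent_evals {α 𝕜 E : Type*}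
    [NontriviallyNormedField 𝕜] [NormedAddCommGroup E] [NormedSpace 𝕜 E] {S : Set α}
    {L : α → E →L[𝕜] 𝕜} {e₁ e₂ : E}
    (h : ∀ a b c : 𝕜, (∀ x ∈ S, a + b * L x e₁ + c * L x e₂ = 0) → a = 0 ∧ b = 0 ∧ c = 0) :
    ¬ Collinear 𝕜 (L '' S) := by
  rw [collinear_iff_exists_forall_eq_smul_vadd]
  rintro ⟨p, m, hm⟩
  obtain ⟨b, c, hbc, hm₀⟩ : ∃ b c : 𝕜, ¬ (b = 0 ∧ c = 0) ∧ b * m e₁ + c * m e₂ = 0 := by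
    by_cases h₁ : m e₁ = 0
    · exact ⟨1, 0, by simp, by simp [h₁]⟩
    · exact ⟨m e₂, -m e₁, by simp [h₁], by ring⟩
  refine hbc (h (-(b * p e₁ + c * p e₂)) b c fun x hx => ?_).2
  obtain ⟨r, hr⟩ := hm (L x) (Set.mem_image_of_mem L hx)
  simp only [hr, vadd_eq_add, _root_.add_apply, _root_.smul_apply, smul_eq_mul]
  linear_combination r * hm₀

theorem IsOpen.exists_eq_add_add_mul_of_fderiv_eq {E : Type*} [NormedAddCommGroup E]
    [NormedSpace ℝ E] {S : Set E} {ω g : E → ℝ} {b : E →L[ℝ] ℝ} {c : ℝ}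
    (hS : IsOpen S) (hS' : IsPreconnected S) (hω : DifferentiableOn ℝ ω S)
    (hg : DifferentiableOn ℝ g S) (h : ∀ v ∈ S, fderiv ℝ g v = b + c • fderiv ℝ ω v) :
    ∃ a : ℝ, ∀ v ∈ S, g v = a + b v + c * ω v := by
  have hmodel : ∀ v ∈ S, HasFDerivAt (fun v => b v + c * ω v) (b + c • fderiv ℝ ω v) v :=
    fun v hv => b.hasFDerivAt.add
      (((hω.differentiableAt (hS.mem_nhds hv)).hasFDerivAt).const_mul c)
  obtain ⟨a, ha⟩ := hS.exists_eq_add_of_fderiv_eq hS' hg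
    (fun v hv => (hmodel v hv).differentiableAt.differentiableWithinAt)
    (fun v hv => by rw [h v hv, (hmodel v hv).fderiv])
  exact ⟨a, fun v hv => by rw [ha hv]; ring⟩

theorem stmt_6_general (d : ℕ) (ω g : (Fin d → ℝ) → ℝ)
    (hω : ContDiffOn ℝ 2 ω {v : Fin d → ℝ | v ≠ 0})
    (hg : ContDiffOn ℝ 1 g {v : Fin d → ℝ | v ≠ 0})
    (i j : Fin d) (hij : i ≠ j)
    (hindep : ∀ α β γ : ℝ,
      (∀ v : Fin d → ℝ, v ≠ 0 →
        α + β * fderiv ℝ ω v (Pi.single i 1) + γ * fderiv ℝ ω v (Pi.single j 1) = 0) →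
      α = 0 ∧ β = 0 ∧ γ = 0)
    (hcoll : ∀ v w v' w' : Fin d → ℝ,
      v + w = v' + w' → ω v + ω w = ω v' + ω w' → g v + g w = g v' + g w') :
    ∃ (a c : ℝ) (b : Fin d → ℝ), ∀ v : Fin d → ℝ, v ≠ 0 →
      g v = a + (∑ k, b k * v k) + c * ω v := by
  have hS : IsOpen {v : Fin d → ℝ | v ≠ 0} := isOpen_compl_singleton
  have hS' : IsPreconnected {v : Fin d → ℝ | v ≠ 0} := by
    have : 1 < d := Fin.nontrivial_iff_two_le.1 (nontrivial_of_ne i j hij)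
    exact (isConnected_compl_singleton_of_one_lt_rank (by simpa using this) 0).isPreconnected
  have hω₁ : ContDiffOn ℝ 1 ω {v | v ≠ 0} := hω.of_le (by norm_num)
  obtain ⟨b, c, hbc⟩ := (hasParallelIncrements_fderiv hS hω₁ hg hcoll).exists_eq_add_smul
    (not_collinear_image_of_linearIndependent_evals hindep)
  obtain ⟨a, ha⟩ := hS.exists_eq_add_add_mul_of_fderiv_eq hS' (hω₁.differentiableOn one_ne_zero)
    (hg.differentiableOn one_ne_zero) hbc
  refine ⟨a, c, fun k => b (Pi.single k 1), fun v hv => ?_⟩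
  have hb : b v = ∑ k, b (Pi.single k 1) * v k := by
    conv_lhs => rw [pi_eq_sum_univ' v]
    simp [map_sum, mul_comm]
  rw [ha v hv, hb]

theorem stmt_6 (d : ℕ) (hd : d = 2 ∨ d = 3) (ω g : (Fin d → ℝ) → ℝ)
    (hω : ContDiffOn ℝ 2 ω {v : Fin d → ℝ | v ≠ 0})
    (hg : ContDiffOn ℝ 1 g {v : Fin d → ℝ | v ≠ 0})
    (i j : Fin d) (hij : i ≠ j)
    (hindep : ∀ α β γ : ℝ,
      (∀ v : Fin d → ℝ, v ≠ 0 →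
        α + β * fderiv ℝ ω v (Pi.single i 1) + γ * fderiv ℝ ω v (Pi.single j 1) = 0) →
      α = 0 ∧ β = 0 ∧ γ = 0)
    (hcoll : ∀ v w v' w' : Fin d → ℝ,
      v + w = v' + w' → ω v + ω w = ω v' + ω w' → g v + g w = g v' + g w') :
    ∃ (a c : ℝ) (b : Fin d → ℝ), ∀ v : Fin d → ℝ, v ≠ 0 →
      g v = a + (∑ k, b k * v k) + c * ω v :=
  stmt_6_general d ω g hω hg i j hij hindep hcoll
end

section
/- Let d ∈ {2,3}, ω ∈ C²(ℝ^d \ {0}, ℝ), and g ∈ C¹(ℝ^d \ {0}, ℝ). Suppose that for all v, v*, v', v*' ∈ ℝ^d \ {0} with v + v* = v' + v*' and ω(v) + ω(v*) = ω(v') + ω(v*'), one has g(v) + g(v*) = g(v') + g(v*'). Then for all v, v* ∈ ℝ^d \ {0}: (∇g(v) − ∇g(v*)) × (∇ω(v) − ∇ω(v*)) = 0 (cross product in ℝ³; for d = 2 the cross product of a = (a₁,a₂) and b = (b₁,b₂) means a₁b₂ − a₂b₁). -/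
/-!
Moving a colliding pair to `v + x`, `w - x` conserves momentum. Near `x = 0`, on the energy
surface `ω (v + x) + ω (w - x) = ω v + ω w` the quantity `g (v + x) + g (w - x)` is constant,
so `x = 0` is a constrained extremum. Lagrange multipliers then make the derivatives at `0` of
the two functions, `ω'(v) - ω'(w)` and `g'(v) - g'(w)`, linearly dependent, and all `2 × 2`
minors of a pair of dependent covectors vanish.
-/

open Filter Topology

section CollisionInvariant

variable {E : Type*} [NormedAddCommGroup E] [NormedSpace ℝ E]

def IsCollisionInvariant (ω g : E → ℝ) (U : Set E) : Prop :=
  ∀ v w v' w', v ∈ U → w ∈ U → v' ∈ U → w' ∈ U →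
    v + w = v' + w' → ω v + ω w = ω v' + ω w' → g v + g w = g v' + g w'

theorem apply_mul_apply_eq_of_smul_add_smul_eq_zero {f φ : StrongDual ℝ E} {a b : ℝ}
    (hab : (a, b) ≠ 0) (h : a • f + b • φ = 0) (x y : E) : f x * φ y = f y * φ x := by
  have hpt : ∀ z, a * f z + b * φ z = 0 := fun z => by
    simpa using congrArg (fun L : StrongDual ℝ E => L z) h
  by_cases ha : a = 0
  · have hb : b ≠ 0 := fun hb => hab (by simp [ha, hb])
    have hφ : ∀ z, φ z = 0 := fun z => by simpa [ha, hb] using hpt z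
    simp [hφ]
  · apply mul_left_cancel₀ ha
    linear_combination φ y * hpt x - φ x * hpt y

theorem hasStrictFDerivAt_add_sub_comp {F : E → ℝ} {v w : E} {F'v F'w : StrongDual ℝ E}
    (hv : HasStrictFDerivAt F F'v v) (hw : HasStrictFDerivAt F F'w w) :
    HasStrictFDerivAt (fun x => F (v + x) + F (w - x)) (F'v - F'w) 0 := by
  rw [← add_zero v] at hv
  rw [← sub_zero w] at hw
  have hplus : HasStrictFDerivAt (fun x => F (v + x)) F'v 0 := by
    simpa using hv.comp 0 ((hasStrictFDerivAt_id 0).const_add v)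
  have hminus : HasStrictFDerivAt (fun x => F (w - x)) (-F'w) 0 := by
    simpa using hw.comp 0 ((hasStrictFDerivAt_id 0).const_sub w)
  simpa only [sub_eq_add_neg] using hplus.fun_add hminus

variable [CompleteSpace E]

theorem IsCollisionInvariant.exists_multipliers {ω g : E → ℝ} {U : Set E}
    (hcoll : IsCollisionInvariant ω g U) {v w : E} (hv : U ∈ 𝓝 v) (hw : U ∈ 𝓝 w)
    {ω'v ω'w g'v g'w : StrongDual ℝ E}
    (hωv : HasStrictFDerivAt ω ω'v v) (hωw : HasStrictFDerivAt ω ω'w w)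
    (hgv : HasStrictFDerivAt g g'v v) (hgw : HasStrictFDerivAt g g'w w) :
    ∃ a b : ℝ, (a, b) ≠ 0 ∧ a • (ω'v - ω'w) + b • (g'v - g'w) = 0 := by
  set Ω := fun x => ω (v + x) + ω (w - x)
  set G := fun x => g (v + x) + g (w - x)
  have hnear : ∀ᶠ x in 𝓝 (0 : E), v + x ∈ U ∧ w - x ∈ U :=
    ((continuous_const_add v).tendsto' 0 v (add_zero v)).eventually_mem hv |>.and
      (((continuous_sub_left w).tendsto' 0 w (sub_zero w)).eventually_mem hw)
  have hextr : IsLocalExtrOn G {x | Ω x = Ω 0} 0 := by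
    refine Or.inl ?_
    filter_upwards [nhdsWithin_le_nhds hnear, self_mem_nhdsWithin] with x ⟨hxv, hxw⟩ hx
    refine le_of_eq ?_
    simp only [G, add_zero, sub_zero]
    refine hcoll v w (v + x) (w - x) (mem_of_mem_nhds hv) (mem_of_mem_nhds hw) hxv hxw
      (by abel) ?_
    simpa [Ω] using hx.symm
  exact hextr.exists_multipliers_of_hasStrictFDerivAt_1d (hasStrictFDerivAt_add_sub_comp hωv hωw)
    (hasStrictFDerivAt_add_sub_comp hgv hgw)

end CollisionInvariant

theorem stmt_7_general (d : ℕ) (ω g : (Fin d → ℝ) → ℝ)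
    (hω : ContDiffOn ℝ 2 ω {v : Fin d → ℝ | v ≠ 0})
    (hg : ContDiffOn ℝ 1 g {v : Fin d → ℝ | v ≠ 0})
    (hcoll : ∀ v w v' w' : Fin d → ℝ, v ≠ 0 → w ≠ 0 → v' ≠ 0 → w' ≠ 0 →
      v + w = v' + w' → ω v + ω w = ω v' + ω w' → g v + g w = g v' + g w') :
    -- the cross product (∇g(v) − ∇g(v*)) × (∇ω(v) − ∇ω(v*)) vanishes, expressed
    -- through the vanishing of all its 2×2 minors (valid both for d = 2 and d = 3)
    ∀ v w : Fin d → ℝ, v ≠ 0 → w ≠ 0 → ∀ i j : Fin d,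
      (fderiv ℝ g v (Pi.single i 1) - fderiv ℝ g w (Pi.single i 1)) *
          (fderiv ℝ ω v (Pi.single j 1) - fderiv ℝ ω w (Pi.single j 1)) -
        (fderiv ℝ g v (Pi.single j 1) - fderiv ℝ g w (Pi.single j 1)) *
          (fderiv ℝ ω v (Pi.single i 1) - fderiv ℝ ω w (Pi.single i 1)) = 0 := by
  intro v w hv hw i j
  have hU : ∀ x : Fin d → ℝ, x ≠ 0 → {v : Fin d → ℝ | v ≠ 0} ∈ 𝓝 x :=
    fun x hx => isOpen_ne.mem_nhds hx
  have strict : ∀ {n : WithTop ℕ∞} {F : (Fin d → ℝ) → ℝ}, ContDiffOn ℝ n F {v | v ≠ 0} → n ≠ 0 →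
      ∀ x : Fin d → ℝ, x ≠ 0 → HasStrictFDerivAt F (fderiv ℝ F x) x :=
    fun hF hn x hx => (hF.contDiffAt (hU x hx)).hasStrictFDerivAt hn
  obtain ⟨a, b, hab, hlin⟩ := IsCollisionInvariant.exists_multipliers hcoll (hU v hv) (hU w hw)
    (strict hω (by norm_num) v hv) (strict hω (by norm_num) w hw)
    (strict hg one_ne_zero v hv) (strict hg one_ne_zero w hw)
  have hminor := apply_mul_apply_eq_of_smul_add_smul_eq_zero hab hlin (Pi.single j 1) (Pi.single i 1)
  simp only [sub_apply] at hminor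
  linear_combination hminor

theorem stmt_7 (d : ℕ) (hd : d = 2 ∨ d = 3) (ω g : (Fin d → ℝ) → ℝ)
    (hω : ContDiffOn ℝ 2 ω {v : Fin d → ℝ | v ≠ 0})
    (hg : ContDiffOn ℝ 1 g {v : Fin d → ℝ | v ≠ 0})
    (hcoll : ∀ v w v' w' : Fin d → ℝ, v ≠ 0 → w ≠ 0 → v' ≠ 0 → w' ≠ 0 →
      v + w = v' + w' → ω v + ω w = ω v' + ω w' → g v + g w = g v' + g w') :
    -- the cross product (∇g(v) − ∇g(v*)) × (∇ω(v) − ∇ω(v*)) vanishes, expressed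
    -- through the vanishing of all its 2×2 minors (valid both for d = 2 and d = 3)
    ∀ v w : Fin d → ℝ, v ≠ 0 → w ≠ 0 → ∀ i j : Fin d,
      (fderiv ℝ g v (Pi.single i 1) - fderiv ℝ g w (Pi.single i 1)) *
          (fderiv ℝ ω v (Pi.single j 1) - fderiv ℝ ω w (Pi.single j 1)) -
        (fderiv ℝ g v (Pi.single j 1) - fderiv ℝ g w (Pi.single j 1)) *
          (fderiv ℝ ω v (Pi.single i 1) - fderiv ℝ ω w (Pi.single i 1)) = 0 :=
  stmt_7_general d ω g hω hg hcoll
end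

section
/- In dimension d = 1 with dispersion law ω(v) = √(1 + v²), the function g(v) = arcsinh(v) = ln(v + √(1+v²)) satisfies: for all v, v*, v', v*' ∈ ℝ with v + v* = v' + v*' and ω(v) + ω(v*) = ω(v') + ω(v*'), one has g(v) + g(v*) = g(v') + g(v*'); moreover g is not of the form a + b v + c ω(v) for any constants a, b, c ∈ ℝ. -/
lemma exp_sum_eq (a b a' b' : ℝ)
    (h1 : Real.exp a + Real.exp b = Real.exp a' + Real.exp b')
    (h2 : Real.exp (-a) + Real.exp (-b) = Real.exp (-a') + Real.exp (-b')) :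
    a + b = a' + b' := by
  have e1 : Real.exp (a + b) * (Real.exp (-a) + Real.exp (-b))
      = Real.exp a + Real.exp b := by
    rw [mul_add, ← Real.exp_add, ← Real.exp_add]
    ring_nf
  have e2 : Real.exp (a' + b') * (Real.exp (-a') + Real.exp (-b'))
      = Real.exp a' + Real.exp b' := by
    rw [mul_add, ← Real.exp_add, ← Real.exp_add]
    ring_nf
  have hT : 0 < Real.exp (-a') + Real.exp (-b') := by positivity
  have : Real.exp (a + b) = Real.exp (a' + b') := by
    have := e1.trans (h1.trans e2.symm)
    rw [h2] at this
    exact mul_right_cancel₀ hT.ne' this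
  exact Real.exp_injective this

theorem stmt_18 (ω g : ℝ → ℝ)
    (hω : ∀ v : ℝ, ω v = Real.sqrt (1 + v ^ 2))
    (hg : ∀ v : ℝ, g v = Real.arsinh v) :
    (∀ v w v' w' : ℝ, v + w = v' + w' → ω v + ω w = ω v' + ω w' →
      g v + g w = g v' + g w') ∧
    ¬ ∃ a b c : ℝ, ∀ v : ℝ, g v = a + b * v + c * ω v := by
  have hexp : ∀ v : ℝ, Real.exp (Real.arsinh v) = Real.sqrt (1 + v ^ 2) + v := by
    intro v
    rw [← Real.cosh_add_sinh, Real.cosh_arsinh, Real.sinh_arsinh]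
  have hexpn : ∀ v : ℝ, Real.exp (-Real.arsinh v) = Real.sqrt (1 + v ^ 2) - v := by
    intro v
    rw [← Real.cosh_sub_sinh, Real.cosh_arsinh, Real.sinh_arsinh]
  constructor
  · intro v w v' w' hsum hω'
    rw [hω v, hω w, hω v', hω w'] at hω'
    rw [hg, hg, hg, hg]
    apply exp_sum_eq
    · rw [hexp, hexp, hexp, hexp]; linarith
    · rw [hexpn, hexpn, hexpn, hexpn]; linarith
  · rintro ⟨a, b, c, h⟩
    have h0 := h 0
    have h3p := h (Real.sqrt 3)
    have h3n := h (-Real.sqrt 3)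
    rw [hg, hω] at h0 h3p h3n
    have hs3 : (Real.sqrt 3) ^ 2 = 3 := Real.sq_sqrt (by norm_num)
    simp only [neg_sq, hs3] at h3p h3n
    have e4 : Real.sqrt (1 + 3) = 2 := by
      rw [show (1:ℝ) + 3 = 2 ^ 2 by norm_num, Real.sqrt_sq (by norm_num)]
    have e1 : Real.sqrt (1 + (0:ℝ) ^ 2) = 1 := by
      norm_num
    rw [e4] at h3p h3n
    rw [e1] at h0
    simp only [Real.arsinh_zero] at h0
    have hodd : Real.arsinh (-Real.sqrt 3) = -Real.arsinh (Real.sqrt 3) :=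
      Real.arsinh_neg _
    -- from h3p + h3n : 0 = 2a + 4c ; from h0 : 0 = a + c
    have hc : c = 0 := by
      have := h3p
      have := h3n
      nlinarith [h3p, h3n, h0, hodd]
    have ha : a = 0 := by nlinarith [h0, hc]
    -- now arsinh v = b v for all v
    have hb : ∀ v : ℝ, Real.arsinh v = b * v := by
      intro v
      have := h v
      rw [hg, hω, hc, ha] at this
      linarith
    have h1 := hb (Real.sinh 1)
    have h2 := hb (Real.sinh 2)
    rw [Real.arsinh_sinh] at h1 h2
    have hs2 : Real.sinh 2 = 2 * Real.sinh 1 * Real.cosh 1 := by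
      rw [show (2:ℝ) = 1 + 1 by norm_num, Real.sinh_add]
      ring
    have hsp : 0 < Real.sinh 1 := by
      have := Real.sinh_lt_sinh (x := 0) (y := 1)
      rw [Real.sinh_zero] at this
      exact this.mpr one_pos
    have hcosh : Real.cosh 1 = 1 := by
      rw [hs2] at h2
      have hb1 : b * Real.sinh 1 = 1 := by linarith
      nlinarith
    have : (1:ℝ) < Real.cosh 1 := by
      have := Real.cosh_lt_cosh (x := 0) (y := 1)
      rw [Real.cosh_zero] at this
      exact this.mpr (by norm_num)
    linarith
end
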